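/- Let s ≥ 2, n = 2s − 1, and ω ∈ ℝ. Define S_{n−1} = ω, S_{n−3} = S_{n+1} = 1, and S_l = 0 for every other l ∈ {0,…,2n−1}. There exist m ≤ n, nonzero complex numbers Z_1,…,Z_m and pairwise distinct complex numbers z_1,…,z_m with |z_k| = 1 such that ∑_{k=1}^m Z_k z_k^l = S_l for every l = 0,…,2n−1, if and only if U_s(ω/2) = 0. Moreover, in that case m = 2s − 2, the set {z_1,…,z_m} is exactly the set of roots of the polynomial R_{s−1}(ω; z²), and every X_k := Z_k z_k^{n−1} is real. -/

import Mathlib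

/-!
Write `Λ f = ∑ Z_k f(z_k)` and `L f` for the coefficient of `X^{2s}` in `(1 + ωX² + X⁴) f`, so
that `L (X^l) = S_l` and the moment system says `Λ = L` on polynomials of degree `< 2n = 4s - 2`.

Necessity. `Λ` kills every multiple of the node polynomial `p = ∏ (X - z_k)`. If `m < 2s - 2`,
then `L (X^{2s} p) = p(0) ≠ 0`. As `L` only sees even degrees, `(Z, -z)` is another solution, and
uniqueness of such representations (tested against Lagrange bases) makes the node set symmetric
under negation; so `m` is even and `m = 2s - 2`. Now `L (X^u p) = 0` says
`(1 + ωX² + X⁴) p ≡ p(0) mod X^{2s+1}`, while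
`(1 + ωX² + X⁴) R_{s-1}(ω; X²) = 1 - r_s X^{2s} + r_{s-1} X^{2s+2}`; since `1 + ωX² + X⁴` is prime
to `X`, this forces `p = p(0) R_{s-1}(ω; X²)` and `r_s(ω) = 0`.

Sufficiency. If `r_s(ω) = 0`, then `r_{s-1}(ω)² = 1` (a Casoratian identity) and
`(1 + ωX² + X⁴) R_{s-1}(ω; X²) = 1 + r_{s-1} X^{2s+2}`, so `R_{s-1}(ω; X²)` has `2s - 2` simple
roots, all on the unit circle. Lagrange weights give `Λ = L` below degree `2s - 2`, and both
functionals vanish on the multiples of `R_{s-1}(ω; X²)` of degree `< 4s - 2`, hence `Λ = L` there.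

Reality. On the unit circle `conj z = z⁻¹`, and `S` is real and symmetric about `n - 1`, so the
weights `conj (Z_k) z_k^{-2(n-1)}` solve the same system on the same nodes; uniqueness of the
weights gives `conj (Z_k z_k^{n-1}) = Z_k z_k^{n-1}`.
-/

/-- r_{-1} = 0, r_0 = 1, r_k(ω) = -ω r_{k-1}(ω) - r_{k-2}(ω); r_k(ω) = (-1)^k U_k(ω/2). -/
def chebr : ℕ → ℝ → ℝ
  | 0 => fun _ => 1
  | 1 => fun ω => -ω
  | (k + 2) => fun ω => -ω * chebr (k + 1) ω - chebr k ω

open Polynomial Finset ComplexConjugate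

namespace MomentSystem

theorem chebr_add_two (k : ℕ) (ω : ℝ) : chebr (k + 2) ω = -ω * chebr (k + 1) ω - chebr k ω :=
  rfl

theorem chebr_eq_neg_one_pow_mul_eval_U (ω : ℝ) :
    ∀ k : ℕ, chebr k ω = (-1) ^ k * (Chebyshev.U ℝ k).eval (ω / 2)
  | 0 => by simp [chebr]
  | 1 => by simp [chebr]; ring
  | k + 2 => by
    have hU := Chebyshev.U_add_two ℝ k
    push_cast at hU ⊢
    rw [chebr_add_two, chebr_eq_neg_one_pow_mul_eval_U ω k,
      chebr_eq_neg_one_pow_mul_eval_U ω (k + 1), hU]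
    push_cast
    simp only [eval_sub, eval_mul, eval_ofNat, eval_X]
    ring

theorem chebr_eq_zero_iff (k : ℕ) (ω : ℝ) :
    chebr k ω = 0 ↔ (Chebyshev.U ℝ k).eval (ω / 2) = 0 := by
  simp [chebr_eq_neg_one_pow_mul_eval_U]

theorem chebr_sq_sub_mul (ω : ℝ) (k : ℕ) :
    chebr (k + 1) ω ^ 2 - chebr (k + 2) ω * chebr k ω = 1 := by
  induction k with
  | zero => simp [chebr]; ring
  | succ k ih => rw [chebr_add_two (k + 1), chebr_add_two k] at *; linear_combination ih

theorem sq_chebr_eq_one_of_succ_eq_zero (ω : ℝ) {k : ℕ} (hk : chebr (k + 1) ω = 0) :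
    chebr k ω ^ 2 = 1 := by
  have := chebr_sq_sub_mul ω k
  rw [chebr_add_two, hk] at this
  linear_combination this

theorem ne_zero_of_norm_eq_one {E : Type*} [NormedAddCommGroup E] {x : E} (hx : ‖x‖ = 1) :
    x ≠ 0 :=
  norm_ne_zero_iff.1 (by rw [hx]; exact one_ne_zero)

theorem linearMap_eq_of_eq_X_pow {R M : Type*} [CommSemiring R] [AddCommMonoid M] [Module R M]
    {φ ψ : R[X] →ₗ[R] M} {N : ℕ} (h : ∀ l < N, φ (X ^ l) = ψ (X ^ l)) {f : R[X]}
    (hf : f.natDegree < N) : φ f = ψ f := by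
  rw [as_sum_range' f N hf]
  simp only [map_sum, ← C_mul_X_pow_eq_monomial, ← smul_eq_C_mul, map_smul]
  exact sum_congr rfl fun l hl => by rw [h l (mem_range.1 hl)]

theorem linearMap_eq_of_eq_on_remainders {R M : Type*} [CommRing R] [Nontrivial R] [AddCommGroup M]
    [Module R M] {φ ψ : R[X] →ₗ[R] M} {p : R[X]} (hp : p.Monic) {N : ℕ}
    (hlow : ∀ f, f.degree < p.degree → φ f = ψ f)
    (hφ : ∀ h, (p * h).natDegree < N → φ (p * h) = 0)
    (hψ : ∀ h, (p * h).natDegree < N → ψ (p * h) = 0) {f : R[X]} (hf : f.natDegree < N) :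
    φ f = ψ f := by
  have hdiv : (p * (f /ₘ p)).natDegree < N := by
    rw [← sub_eq_iff_eq_add'.2 (modByMonic_add_div f p).symm]
    exact (natDegree_sub_le _ _).trans_lt (max_lt hf (natDegree_modByMonic_le_left.trans_lt hf))
  rw [← modByMonic_add_div f p, map_add, map_add, hlow _ (degree_modByMonic_lt f hp),
    hφ _ hdiv, hψ _ hdiv]

theorem eval_nodal_univ_eq_zero_iff {ι R : Type*} [Fintype ι] [CommRing R] [IsDomain R]
    {v : ι → R} {x : R} : (Lagrange.nodal univ v).eval x = 0 ↔ x ∈ Set.range v := by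
  rw [Lagrange.eval_nodal, prod_eq_zero_iff]
  simp [sub_eq_zero, eq_comm]

theorem coeff_zero_nodal_ne_zero {ι R : Type*} [CommRing R] [IsDomain R] {s : Finset ι}
    {v : ι → R} (hv : ∀ i ∈ s, v i ≠ 0) : (Lagrange.nodal s v).coeff 0 ≠ 0 := by
  rw [coeff_zero_eq_eval_zero, Lagrange.eval_nodal]
  exact prod_ne_zero_iff.2 fun i hi => by simpa using hv i hi

section WeightedEval

variable {K : Type*} [Field K] {ι ι' : Type*} [Fintype ι] [Fintype ι']

noncomputable def weightedEval (Z z : ι → K) : K[X] →ₗ[K] K :=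
  ∑ k, Z k • leval (z k)

theorem weightedEval_apply (Z z : ι → K) (f : K[X]) :
    weightedEval Z z f = ∑ k, Z k * f.eval (z k) := by
  simp [weightedEval]

theorem weightedEval_X_pow (Z z : ι → K) (l : ℕ) :
    weightedEval Z z (X ^ l) = ∑ k, Z k * z k ^ l := by
  simp [weightedEval_apply]

theorem weightedEval_basis_mul [DecidableEq ι] {Z z : ι → K} (hz : Function.Injective z) (j : ι)
    (f : K[X]) : weightedEval Z z (Lagrange.basis univ z j * f) = Z j * f.eval (z j) := by
  rw [weightedEval_apply, sum_eq_single j (fun k _ hkj => by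
      rw [eval_mul, Lagrange.eval_basis_of_ne hkj.symm (mem_univ k), zero_mul, mul_zero])
    (fun h => absurd (mem_univ j) h),
    eval_mul, Lagrange.eval_basis_self hz.injOn (mem_univ j), one_mul]

theorem eq_of_weightedEval_X_pow_eq {W W' z : ι → K} (hz : Function.Injective z)
    (h : ∀ l < Fintype.card ι, weightedEval W z (X ^ l) = weightedEval W' z (X ^ l)) :
    W = W' := by
  classical
  funext j
  have hdeg : (Lagrange.basis univ z j * 1).natDegree < Fintype.card ι := by
    rw [mul_one, Lagrange.natDegree_basis hz.injOn (mem_univ j), card_univ]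
    exact Nat.sub_lt (Fintype.card_pos_iff.2 ⟨j⟩) one_pos
  have key := linearMap_eq_of_eq_X_pow h hdeg
  rwa [weightedEval_basis_mul hz, weightedEval_basis_mul hz, eval_one, mul_one, mul_one] at key

theorem mem_range_of_weightedEval_X_pow_eq {Z z : ι → K} {Z' z' : ι' → K}
    (hz : Function.Injective z) {j : ι} (hZ : Z j ≠ 0)
    (h : ∀ l < Fintype.card ι + Fintype.card ι',
      weightedEval Z z (X ^ l) = weightedEval Z' z' (X ^ l)) :
    z j ∈ Set.range z' := by
  classical
  have hdeg : (Lagrange.basis univ z j * Lagrange.nodal univ z').natDegree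
      < Fintype.card ι + Fintype.card ι' := by
    refine natDegree_mul_le.trans_lt ?_
    rw [Lagrange.natDegree_basis hz.injOn (mem_univ j), Lagrange.natDegree_nodal, card_univ,
      card_univ]
    have := Fintype.card_pos_iff.2 ⟨j⟩
    omega
  have key := linearMap_eq_of_eq_X_pow h hdeg
  rw [weightedEval_basis_mul hz, weightedEval_apply,
    sum_eq_zero fun k _ => by rw [eval_mul, Lagrange.eval_nodal_at_node (mem_univ k),
      mul_zero, mul_zero]] at key
  exact eval_nodal_univ_eq_zero_iff.1 ((mul_eq_zero.1 key).resolve_left hZ)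

theorem exists_weightedEval_eq {z : ι → K} (hz : Function.Injective z) (φ : K[X] →ₗ[K] K) :
    ∃ W : ι → K, ∀ f : K[X], f.degree < Fintype.card ι → weightedEval W z f = φ f := by
  classical
  refine ⟨fun k => φ (Lagrange.basis univ z k), fun f hf => ?_⟩
  conv_rhs => rw [Lagrange.eq_interpolate (s := univ) (f := f) hz.injOn (by rwa [card_univ])]
  rw [Lagrange.interpolate_apply, map_sum, weightedEval_apply]
  exact sum_congr rfl fun k _ => by rw [← smul_eq_C_mul, map_smul, smul_eq_mul, mul_comm]

theorem even_card_of_neg_mem_range {z : ι → K} (hK : (-1 : K) ≠ 1) (hz : Function.Injective z)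
    (h0 : ∀ k, z k ≠ 0) (hneg : ∀ j, -z j ∈ Set.range z) : Even (Fintype.card ι) := by
  choose σ hσ using hneg
  have hσ_bij : Function.Bijective σ :=
    Finite.injective_iff_bijective.1 fun a b hab => hz (neg_injective (by rw [← hσ, ← hσ, hab]))
  have hprod : (-1) ^ Fintype.card ι * ∏ k, z k = ∏ k, z k := by
    rw [← card_univ, ← prod_neg]
    exact Fintype.prod_bijective σ hσ_bij _ _ fun k => (hσ k).symm
  have hne : ∏ k, z k ≠ 0 := prod_ne_zero_iff.2 fun k _ => h0 k
  exact (neg_one_pow_eq_one_iff_even hK).1 (mul_right_cancel₀ hne (by rw [hprod, one_mul]))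

end WeightedEval

noncomputable def quartic (ω : ℝ) : ℂ[X] := 1 + C (ω : ℂ) * X ^ 2 + X ^ 4

/-- The paper's `R_{s-1}(ω; X²)`. -/
noncomputable def rPoly (s : ℕ) (ω : ℝ) : ℂ[X] :=
  ∑ k ∈ range s, C (chebr k ω : ℂ) * X ^ (2 * k)

theorem coeff_zero_quartic (ω : ℝ) : (quartic ω).coeff 0 = 1 := by
  simp [quartic, coeff_X_pow]

theorem eval_rPoly (s : ℕ) (ω : ℝ) (t : ℂ) :
    (rPoly s ω).eval t = ∑ k ∈ range s, (chebr k ω : ℂ) * t ^ (2 * k) := by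
  simp [rPoly, eval_finsetSum]

theorem quartic_mul_rPoly (s : ℕ) (ω : ℝ) :
    quartic ω * rPoly (s + 1) ω =
      1 - C (chebr (s + 1) ω : ℂ) * X ^ (2 * s + 2) + C (chebr s ω : ℂ) * X ^ (2 * s + 4) := by
  induction s with
  | zero => simp [quartic, rPoly, chebr]
  | succ s ih =>
    rw [rPoly, sum_range_succ, ← rPoly, mul_add, ih, chebr_add_two, quartic]
    push_cast
    simp only [map_sub, map_neg, map_mul]
    ring

theorem natDegree_rPoly_le (s : ℕ) (ω : ℝ) : (rPoly (s + 1) ω).natDegree ≤ 2 * s :=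
  natDegree_sum_le_of_forall_le _ _ fun k hk =>
    (natDegree_C_mul_X_pow_le _ _).trans (by simp only [mem_range] at hk; omega)

theorem coeff_rPoly_two_mul (s : ℕ) (ω : ℝ) :
    (rPoly (s + 1) ω).coeff (2 * s) = chebr s ω := by
  simp only [rPoly, finsetSum_coeff, coeff_C_mul_X_pow]
  rw [sum_eq_single s (fun k _ hks => if_neg (by omega)) (by simp)]
  simp

theorem not_X_dvd_quartic (ω : ℝ) : ¬X ∣ quartic ω := by
  rw [X_dvd_iff, coeff_zero_quartic]
  exact one_ne_zero

theorem eq_C_mul_rPoly_of_coeff_quartic_mul {s : ℕ} {ω : ℝ} {p : ℂ[X]} (hp : p.natDegree ≤ 2 * s)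
    (hq : ∀ j, 1 ≤ j → j ≤ 2 * s + 2 → (quartic ω * p).coeff j = 0) :
    p = C (p.coeff 0) * rPoly (s + 1) ω ∧ p.coeff 0 * chebr (s + 1) ω = 0 := by
  have hqR := quartic_mul_rPoly s ω
  set g := p - C (p.coeff 0) * rPoly (s + 1) ω
  have hlow : ∀ j < 2 * s + 2, (quartic ω * g).coeff j = 0 := by
    intro j hj
    rw [mul_sub, mul_left_comm, hqR, coeff_sub, coeff_C_mul]
    rcases Nat.eq_zero_or_pos j with rfl | hj0
    · simp [mul_coeff_zero, coeff_zero_quartic]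
    · simp [hq j hj0 (by omega), coeff_one, coeff_X_pow, hj0.ne', hj.ne]
      omega
  have hdvd : X ^ (2 * s + 2) ∣ g :=
    prime_X.pow_dvd_of_dvd_mul_left _ (not_X_dvd_quartic ω) (X_pow_dvd_iff.2 hlow)
  have hdeg : g.natDegree < (X ^ (2 * s + 2) : ℂ[X]).natDegree := by
    rw [natDegree_X_pow]
    exact (natDegree_sub_le _ _).trans_lt (max_lt (by omega)
      ((natDegree_C_mul_le _ _).trans_lt (by have := natDegree_rPoly_le s ω; omega)))
  have hp_eq := sub_eq_zero.1 (eq_zero_of_dvd_of_natDegree_lt hdvd hdeg)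
  refine ⟨hp_eq, ?_⟩
  have htop := hq (2 * s + 2) (by omega) le_rfl
  rw [hp_eq, mul_left_comm, hqR, coeff_C_mul] at htop
  simpa [coeff_one, coeff_X_pow] using htop

theorem quartic_mul_rPoly_of_chebr_eq_zero {s : ℕ} {ω : ℝ} (hr : chebr (s + 1) ω = 0) :
    quartic ω * rPoly (s + 1) ω = 1 + C (chebr s ω : ℂ) * X ^ (2 * s + 4) := by
  rw [quartic_mul_rPoly, hr]
  simp

theorem natDegree_rPoly {s : ℕ} {ω : ℝ} (hr : chebr s ω ≠ 0) :
    (rPoly (s + 1) ω).natDegree = 2 * s :=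
  natDegree_eq_of_le_of_coeff_ne_zero (natDegree_rPoly_le s ω)
    (by rw [coeff_rPoly_two_mul]; exact_mod_cast hr)

theorem separable_rPoly {s : ℕ} {ω : ℝ} (hr : chebr (s + 1) ω = 0) :
    (rPoly (s + 1) ω).Separable := by
  have hc : (chebr s ω : ℂ) ^ 2 = 1 := by exact_mod_cast sq_chebr_eq_one_of_succ_eq_zero ω hr
  have hc0 : (chebr s ω : ℂ) ≠ 0 := fun h => by simp [h] at hc
  have hfac : X ^ (2 * s + 4) - C (-(chebr s ω : ℂ)) =
      (C (chebr s ω : ℂ) * quartic ω) * rPoly (s + 1) ω := by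
    rw [mul_assoc, quartic_mul_rPoly_of_chebr_eq_zero hr, mul_add, mul_one, ← mul_assoc, ← C_mul,
      ← sq, hc, map_one, one_mul, map_neg, sub_neg_eq_add, add_comm]
  have hsep := separable_X_pow_sub_C (n := 2 * s + 4) (-(chebr s ω : ℂ))
    (by exact_mod_cast (show 2 * s + 4 ≠ 0 by omega)) (neg_ne_zero.2 hc0)
  rw [hfac] at hsep
  exact hsep.of_mul_right

theorem norm_eq_one_of_eval_rPoly_eq_zero {s : ℕ} {ω : ℝ} (hr : chebr (s + 1) ω = 0) {t : ℂ}
    (ht : (rPoly (s + 1) ω).eval t = 0) : ‖t‖ = 1 := by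
  have hct : (chebr s ω : ℂ) * t ^ (2 * s + 4) = -1 := by
    have := congrArg (eval t) (quartic_mul_rPoly_of_chebr_eq_zero hr)
    simp only [eval_mul, ht, mul_zero, eval_add, eval_one, eval_C, eval_pow, eval_X] at this
    linear_combination -this
  have habs : |chebr s ω| = 1 := (pow_eq_one_iff_of_nonneg (abs_nonneg _) two_ne_zero).1
    (by rw [sq_abs, sq_chebr_eq_one_of_succ_eq_zero ω hr])
  have hpow : ‖t‖ ^ (2 * s + 4) = 1 := by
    simpa [habs] using congrArg norm hct
  exact (pow_eq_one_iff_of_nonneg (norm_nonneg t) (by omega)).1 hpow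

/-- `momentFunctional s ω (X ^ l)` is the right-hand side `S_l` of the moment system for
`n = 2s - 1` (see `momentFunctional_X_pow`); reading it off `quartic ω * f` turns the three-term
shape of `S` into polynomial multiplication. -/
noncomputable def momentFunctional (s : ℕ) (ω : ℝ) : ℂ[X] →ₗ[ℂ] ℂ :=
  lcoeff ℂ (2 * s) ∘ₗ LinearMap.mulLeft ℂ (quartic ω)

theorem momentFunctional_apply (s : ℕ) (ω : ℝ) (f : ℂ[X]) :
    momentFunctional s ω f = (quartic ω * f).coeff (2 * s) :=
  rfl

theorem momentFunctional_X_pow_mul {s u : ℕ} (ω : ℝ) (hu : u ≤ 2 * s) (f : ℂ[X]) :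
    momentFunctional s ω (X ^ u * f) = (quartic ω * f).coeff (2 * s - u) := by
  rw [momentFunctional_apply, mul_left_comm, coeff_X_pow_mul', if_pos hu]

theorem momentFunctional_X_pow {s : ℕ} (hs : 2 ≤ s) (ω : ℝ) (l : ℕ) :
    momentFunctional s ω (X ^ l) =
      if l = 2 * s - 2 then (ω : ℂ) else if l = 2 * s - 4 ∨ l = 2 * s then 1 else 0 := by
  rw [momentFunctional_apply, coeff_mul_X_pow']
  simp only [quartic, coeff_add, coeff_one, coeff_C_mul, coeff_X_pow]
  split_ifs <;> first | omega | simp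

theorem momentFunctional_X_pow_of_odd {s : ℕ} (hs : 2 ≤ s) (ω : ℝ) {l : ℕ} (hl : Odd l) :
    momentFunctional s ω (X ^ l) = 0 := by
  obtain ⟨r, rfl⟩ := hl
  rw [momentFunctional_X_pow hs]
  split_ifs <;> first | rfl | omega

theorem conj_momentFunctional_X_pow_sub {s : ℕ} (hs : 2 ≤ s) (ω : ℝ) {l : ℕ}
    (hl : l ≤ 4 * s - 4) :
    conj (momentFunctional s ω (X ^ (4 * s - 4 - l))) = momentFunctional s ω (X ^ l) := by
  rw [momentFunctional_X_pow hs, momentFunctional_X_pow hs]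
  split_ifs <;> first | omega | simp

theorem momentFunctional_rPoly_mul {s : ℕ} {ω : ℝ} (hr : chebr (s + 1) ω = 0) (h : ℂ[X]) :
    momentFunctional (s + 1) ω (rPoly (s + 1) ω * h) = h.coeff (2 * (s + 1)) := by
  rw [momentFunctional_apply, ← mul_assoc, quartic_mul_rPoly_of_chebr_eq_zero hr, add_mul,
    one_mul, coeff_add, mul_assoc, coeff_C_mul, coeff_X_pow_mul', if_neg (by omega), mul_zero,
    add_zero]

/-- The moment system for `n = 2s - 1`, where `l` runs over `0, …, 2n - 1`. -/
def SolvesMoments {ι : Type*} [Fintype ι] (s : ℕ) (ω : ℝ) (Z z : ι → ℂ) : Prop :=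
  ∀ l < 4 * s - 2, weightedEval Z z (X ^ l) = momentFunctional s ω (X ^ l)

namespace SolvesMoments

variable {ι : Type*} [Fintype ι] {s : ℕ} {ω : ℝ} {Z z : ι → ℂ}

theorem apply (h : SolvesMoments s ω Z z) {f : ℂ[X]} (hf : f.natDegree < 4 * s - 2) :
    weightedEval Z z f = momentFunctional s ω f :=
  linearMap_eq_of_eq_X_pow h hf

theorem coeff_zero_eq_zero (h : SolvesMoments s ω Z z) {f : ℂ[X]}
    (hf : f.natDegree < 2 * s - 2) (hvan : ∀ k, Z k * f.eval (z k) = 0) : f.coeff 0 = 0 := by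
  have hdeg : (X ^ (2 * s) * f).natDegree < 4 * s - 2 :=
    natDegree_mul_le.trans_lt (by rw [natDegree_X_pow]; omega)
  have key := h.apply hdeg
  rwa [momentFunctional_X_pow_mul ω le_rfl, Nat.sub_self, mul_coeff_zero, coeff_zero_quartic,
    one_mul, weightedEval_apply,
    sum_eq_zero fun k _ => by rw [eval_mul, mul_left_comm, hvan k, mul_zero], eq_comm] at key

theorem le_card (h : SolvesMoments s ω Z z) (h0 : ∀ k, z k ≠ 0) : 2 * s - 2 ≤ Fintype.card ι := by
  by_contra hlt
  refine coeff_zero_nodal_ne_zero (s := univ) (fun k _ => h0 k) (h.coeff_zero_eq_zero ?_ ?_)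
  · rw [Lagrange.natDegree_nodal, card_univ]
    omega
  · intro k
    rw [Lagrange.eval_nodal_at_node (mem_univ k), mul_zero]

theorem neg (hs : 2 ≤ s) (h : SolvesMoments s ω Z z) : SolvesMoments s ω Z (-z) := by
  intro l hl
  have hl' := h l hl
  rw [weightedEval_X_pow] at hl' ⊢
  rcases Nat.even_or_odd l with he | ho
  · simpa [he.neg_pow] using hl'
  · simp [ho.neg_pow, sum_neg_distrib, hl', momentFunctional_X_pow_of_odd hs ω ho]

theorem even_card (hs : 2 ≤ s) (h : SolvesMoments s ω Z z) (hZ : ∀ k, Z k ≠ 0)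
    (hz : Function.Injective z) (h0 : ∀ k, z k ≠ 0) (hcard : Fintype.card ι ≤ 2 * s - 1) :
    Even (Fintype.card ι) :=
  even_card_of_neg_mem_range (by norm_num) hz h0 fun j =>
    mem_range_of_weightedEval_X_pow_eq (neg_injective.comp hz) (hZ j) fun l hl =>
      (h.neg hs l (by omega)).trans (h l (by omega)).symm

theorem card_eq (hs : 2 ≤ s) (h : SolvesMoments s ω Z z) (hZ : ∀ k, Z k ≠ 0)
    (hz : Function.Injective z) (h0 : ∀ k, z k ≠ 0) (hcard : Fintype.card ι ≤ 2 * s - 1) :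
    Fintype.card ι = 2 * s - 2 := by
  have := h.le_card h0
  obtain ⟨r, hr⟩ := h.even_card hs hZ hz h0 hcard
  omega

theorem coeff_quartic_mul_nodal (h : SolvesMoments s ω Z z) (hcard : Fintype.card ι = 2 * s - 2)
    {j : ℕ} (hj : 1 ≤ j) (hjs : j ≤ 2 * s) : (quartic ω * Lagrange.nodal univ z).coeff j = 0 := by
  have hdeg : (X ^ (2 * s - j) * Lagrange.nodal univ z).natDegree < 4 * s - 2 :=
    natDegree_mul_le.trans_lt (by rw [natDegree_X_pow, Lagrange.natDegree_nodal, card_univ]; omega)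
  have key := h.apply hdeg
  rwa [momentFunctional_X_pow_mul ω (by omega), Nat.sub_sub_self hjs, weightedEval_apply,
    sum_eq_zero fun k _ => by rw [eval_mul, Lagrange.eval_nodal_at_node (mem_univ k), mul_zero,
      mul_zero], eq_comm] at key

theorem nodal_eq (hs : 2 ≤ s) (h : SolvesMoments s ω Z z) (hcard : Fintype.card ι = 2 * s - 2) :
    Lagrange.nodal univ z = C ((Lagrange.nodal univ z).coeff 0) * rPoly s ω ∧
      (Lagrange.nodal univ z).coeff 0 * chebr s ω = 0 := by
  obtain ⟨t, rfl⟩ : ∃ t, s = t + 1 := ⟨s - 1, by omega⟩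
  refine eq_C_mul_rPoly_of_coeff_quartic_mul ?_ fun j hj hjs =>
    h.coeff_quartic_mul_nodal hcard hj (by omega)
  rw [Lagrange.natDegree_nodal, card_univ, hcard]
  omega

theorem chebr_eq_zero (hs : 2 ≤ s) (h : SolvesMoments s ω Z z) (hcard : Fintype.card ι = 2 * s - 2)
    (h0 : ∀ k, z k ≠ 0) : chebr s ω = 0 := by
  have := (mul_eq_zero.1 (h.nodal_eq hs hcard).2).resolve_left
    (coeff_zero_nodal_ne_zero fun k _ => h0 k)
  exact_mod_cast this

theorem range_eq (hs : 2 ≤ s) (h : SolvesMoments s ω Z z) (hcard : Fintype.card ι = 2 * s - 2)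
    (h0 : ∀ k, z k ≠ 0) : Set.range z = {t | (rPoly s ω).eval t = 0} := by
  ext t
  rw [Set.mem_ofPred_eq, ← eval_nodal_univ_eq_zero_iff, (h.nodal_eq hs hcard).1, eval_mul, eval_C,
    mul_eq_zero, or_iff_right (coeff_zero_nodal_ne_zero fun k _ => h0 k)]

theorem conj_mul_pow (hs : 2 ≤ s) (h : SolvesMoments s ω Z z) (hcard : Fintype.card ι < 4 * s - 2)
    (hz : Function.Injective z) (habs : ∀ k, ‖z k‖ = 1) (k : ι) :
    conj (Z k * z k ^ (2 * s - 2)) = Z k * z k ^ (2 * s - 2) := by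
  have h0 : ∀ k, z k ≠ 0 := fun k => ne_zero_of_norm_eq_one (habs k)
  have hconj : ∀ k, conj (z k) = (z k)⁻¹ := fun k => (Complex.inv_eq_conj (habs k)).symm
  have hrefl : (fun k => conj (Z k) * (z k)⁻¹ ^ (4 * s - 4)) = Z := by
    refine eq_of_weightedEval_X_pow_eq hz fun l hl => ?_
    rw [weightedEval_X_pow, h l (by omega),
      ← conj_momentFunctional_X_pow_sub hs ω (l := l) (by omega), ← h _ (by omega),
      weightedEval_X_pow, map_sum]
    refine sum_congr rfl fun k _ => ?_
    rw [map_mul, map_pow, hconj, pow_sub₀ _ (inv_ne_zero (h0 k)) (show l ≤ 4 * s - 4 by omega)]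
    simp only [inv_pow, inv_inv, mul_assoc]
  conv_rhs => rw [← congrFun hrefl k]
  rw [map_mul, map_pow, hconj, show 4 * s - 4 = (2 * s - 2) + (2 * s - 2) by omega, pow_add,
    mul_assoc, mul_assoc, ← mul_pow, inv_mul_cancel₀ (h0 k), one_pow, mul_one]

end SolvesMoments

theorem solvesMoments_of_eval_rPoly_eq_zero {ι : Type*} [Fintype ι] {s : ℕ} {ω : ℝ}
    {W z : ι → ℂ} (hr : chebr (s + 1) ω = 0) (hroot : ∀ k, (rPoly (s + 1) ω).eval (z k) = 0)
    (hcard : Fintype.card ι = 2 * s)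
    (hW : ∀ f : ℂ[X], f.degree < Fintype.card ι →
      weightedEval W z f = momentFunctional (s + 1) ω f) :
    SolvesMoments (s + 1) ω W z := by
  have hc : chebr s ω * chebr s ω = 1 := by rw [← sq, sq_chebr_eq_one_of_succ_eq_zero ω hr]
  have hc0 : chebr s ω ≠ 0 := left_ne_zero_of_mul_eq_one hc
  have hmonic : (C (chebr s ω : ℂ) * rPoly (s + 1) ω).Monic := by
    rw [Monic, leadingCoeff_mul, leadingCoeff_C, leadingCoeff, natDegree_rPoly hc0,
      coeff_rPoly_two_mul]
    exact_mod_cast hc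
  have hdeg : (C (chebr s ω : ℂ) * rPoly (s + 1) ω).natDegree = 2 * s := by
    rw [natDegree_C_mul (Complex.ofReal_ne_zero.2 hc0), natDegree_rPoly hc0]
  intro l hl
  refine linearMap_eq_of_eq_on_remainders hmonic (fun f hf => hW f ?_) (fun h _ => ?_)
    (fun h hh => ?_) (by rwa [natDegree_X_pow])
  · rwa [degree_eq_natDegree hmonic.ne_zero, hdeg, ← hcard] at hf
  · rw [weightedEval_apply]
    exact sum_eq_zero fun k _ => by rw [eval_mul, eval_mul, hroot k, mul_zero, zero_mul, mul_zero]
  · rcases eq_or_ne h 0 with rfl | h0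
    · rw [mul_zero, map_zero]
    rw [hmonic.natDegree_mul' h0, hdeg] at hh
    rw [mul_assoc, ← smul_eq_C_mul, map_smul, momentFunctional_rPoly_mul hr,
      coeff_eq_zero_of_natDegree_lt (by omega), smul_zero]

theorem exists_solvesMoments {s : ℕ} {ω : ℝ} (hs : 2 ≤ s) (hr : chebr s ω = 0) :
    ∃ Z z : Fin (2 * s - 2) → ℂ, (∀ k, Z k ≠ 0) ∧ Function.Injective z ∧ (∀ k, ‖z k‖ = 1) ∧
      SolvesMoments s ω Z z := by
  obtain ⟨t, rfl⟩ : ∃ t, s = t + 1 := ⟨s - 1, by omega⟩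
  have hc0 : chebr t ω ≠ 0 := fun h => by simpa [h] using sq_chebr_eq_one_of_succ_eq_zero ω hr
  have hR0 : rPoly (t + 1) ω ≠ 0 := fun h => hc0 (by
    simpa [h] using (coeff_rPoly_two_mul t ω).symm)
  have hcard : (rPoly (t + 1) ω).roots.toFinset.card = 2 * (t + 1) - 2 := by
    rw [Multiset.toFinset_card_of_nodup (nodup_roots (separable_rPoly hr)),
      IsAlgClosed.card_roots_eq_natDegree, natDegree_rPoly hc0]
    omega
  set e := Finset.equivFinOfCardEq hcard
  set z : Fin (2 * (t + 1) - 2) → ℂ := fun k => e.symm k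
  have hz : Function.Injective z := Subtype.val_injective.comp e.symm.injective
  have hroot : ∀ k, (rPoly (t + 1) ω).eval (z k) = 0 := fun k =>
    (mem_roots hR0).1 (Multiset.mem_toFinset.1 (e.symm k).2)
  have habs : ∀ k, ‖z k‖ = 1 := fun k => norm_eq_one_of_eval_rPoly_eq_zero hr (hroot k)
  obtain ⟨W, hW⟩ := exists_weightedEval_eq hz (momentFunctional (t + 1) ω)
  have hsol := solvesMoments_of_eval_rPoly_eq_zero hr hroot (by simp; omega) hW
  refine ⟨W, z, fun j hj => ?_, hz, habs, hsol⟩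
  -- a vanishing weight would leave a solution on `2s - 3` nodes
  refine coeff_zero_nodal_ne_zero (s := univ.erase j)
    (fun k _ => ne_zero_of_norm_eq_one (habs k))
    (hsol.coeff_zero_eq_zero ?_ fun k => ?_)
  · rw [Lagrange.natDegree_nodal, card_erase_of_mem (mem_univ j), card_univ, Fintype.card_fin]
    omega
  · rcases eq_or_ne k j with rfl | hkj
    · rw [hj, zero_mul]
    · rw [Lagrange.eval_nodal_at_node (mem_erase.2 ⟨hkj, mem_univ k⟩), mul_zero]

theorem solvesMoments_iff {ι : Type*} [Fintype ι] {s n : ℕ} {ω : ℝ} (hs : 2 ≤ s)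
    (hn : n = 2 * s - 1) (Z z : ι → ℂ) :
    SolvesMoments s ω Z z ↔ ∀ l : ℤ, 0 ≤ l → l ≤ 2 * (n : ℤ) - 1 →
      ∑ k, Z k * z k ^ l =
        if l = (n : ℤ) - 1 then (ω : ℂ)
        else if l = (n : ℤ) - 3 ∨ l = (n : ℤ) + 1 then 1 else 0 := by
  subst hn
  constructor
  · intro h l hl0 hl
    lift l to ℕ using hl0
    simp only [zpow_natCast]
    rw [← weightedEval_X_pow, h l (by omega), momentFunctional_X_pow hs]
    split_ifs <;> first | rfl | omega
  · intro h l hl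
    have hl' := h l (by positivity) (by omega)
    simp only [zpow_natCast] at hl'
    rw [weightedEval_X_pow, hl', momentFunctional_X_pow hs]
    split_ifs <;> first | rfl | omega

end MomentSystem

open MomentSystem

/-- for μ = 2 and n = 2s - 1, the overdetermined moment system has an
admissible solution iff U_s(ω/2) = 0; in that case m = 2s - 2, the nodes are exactly the
roots of ℛ_{s-1}(ω;z²), and all X_k = Z_k z_k^{n-1} are real. -/
theorem stmt16 (s : ℕ) (hs : 2 ≤ s) (n : ℕ) (hn : n = 2 * s - 1) (ω : ℝ) :
    ((∃ (m : ℕ) (_ : m ≤ n) (Z z : Fin m → ℂ),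
        (∀ k, Z k ≠ 0) ∧ Function.Injective z ∧ (∀ k, ‖z k‖ = 1) ∧
        ∀ l : ℤ, 0 ≤ l → l ≤ 2 * (n : ℤ) - 1 →
          ∑ k : Fin m, Z k * z k ^ l =
            if l = (n : ℤ) - 1 then (ω : ℂ)
            else if l = (n : ℤ) - 3 ∨ l = (n : ℤ) + 1 then 1 else 0)
      ↔ Polynomial.eval (ω / 2) (Polynomial.Chebyshev.U ℝ s) = 0)
    ∧ ∀ (m : ℕ), m ≤ n → ∀ (Z z : Fin m → ℂ),
        (∀ k, Z k ≠ 0) → Function.Injective z → (∀ k, ‖z k‖ = 1) →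
        (∀ l : ℤ, 0 ≤ l → l ≤ 2 * (n : ℤ) - 1 →
          ∑ k : Fin m, Z k * z k ^ l =
            if l = (n : ℤ) - 1 then (ω : ℂ)
            else if l = (n : ℤ) - 3 ∨ l = (n : ℤ) + 1 then 1 else 0) →
        m = 2 * s - 2 ∧
        Set.range z = {t : ℂ | ∑ k ∈ Finset.range s, ((chebr k ω : ℝ) : ℂ) * t ^ (2 * k) = 0} ∧
        ∀ k, (Z k * z k ^ (n - 1)).im = 0 := by
  refine ⟨⟨?_, fun hU => ?_⟩, fun m hm Z z hZ hz habs hmom => ?_⟩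
  · rintro ⟨m, hm, Z, z, hZ, hz, habs, hmom⟩
    have h := (solvesMoments_iff hs hn Z z).2 hmom
    have h0 k := ne_zero_of_norm_eq_one (habs k)
    rw [← chebr_eq_zero_iff]
    exact h.chebr_eq_zero hs (h.card_eq hs hZ hz h0 (by simp; omega)) h0
  · obtain ⟨Z, z, hZ, hz, habs, h⟩ := exists_solvesMoments hs ((chebr_eq_zero_iff s ω).2 hU)
    exact ⟨2 * s - 2, by omega, Z, z, hZ, hz, habs, (solvesMoments_iff hs hn Z z).1 h⟩
  · have h := (solvesMoments_iff hs hn Z z).2 hmom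
    have h0 k := ne_zero_of_norm_eq_one (habs k)
    have hcard := h.card_eq hs hZ hz h0 (by simp; omega)
    refine ⟨by simpa using hcard, ?_, fun k => ?_⟩
    · simp_rw [h.range_eq hs hcard h0, eval_rPoly]
    · rw [hn, show 2 * s - 1 - 1 = 2 * s - 2 by omega]
      exact Complex.conj_eq_iff_im.1 (h.conj_mul_pow hs (by simp; omega) hz habs k)
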